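/- arXiv:1207.3373 — 6 statements merged into one kernel-verified Lean document; each statement's English description precedes it below -/
import Mathlib

section
/- For all natural numbers n and k, the number of partial matchings of the row of n dots that consist of exactly k pairs equals the binomial coefficient C(n−k, k). Formally: the number of finite sets S ⊆ {0, 1, …, n−2} with |S| = k such that any two distinct elements of S differ by at least 2 is Nat.choose (n − k) k. -/
/-!
A sparse `k`-subset of the positions `{0, …, m + 1}` either avoids the last position `m + 1`,
or contains it and then avoids `m`, so that removing `m + 1` leaves a sparse `(k - 1)`-subset of
`{0, …, m - 1}`. The counts therefore satisfy Pascal's rule along the diagonals, which is the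
recurrence of `(m + 1 - k).choose k`.
-/

open Finset

def IsSparse (S : Finset ℕ) : Prop :=
  ∀ a ∈ S, ∀ b ∈ S, a ≠ b → 2 ≤ Nat.dist a b

instance : DecidablePred IsSparse := fun S => by unfold IsSparse; infer_instance

theorem IsSparse.mono {S T : Finset ℕ} (hT : IsSparse T) (hST : S ⊆ T) : IsSparse S :=
  fun a ha b hb => hT a (hST ha) b (hST hb)

theorem isSparse_of_card_le_one {S : Finset ℕ} (hS : #S ≤ 1) : IsSparse S :=
  fun a ha b hb hab => absurd (card_le_one.1 hS a ha b hb) hab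

theorem isSparse_insert_add_one {m : ℕ} {T : Finset ℕ} (hT : T ⊆ range m) :
    IsSparse (insert (m + 1) T) ↔ IsSparse T := by
  refine ⟨fun h => h.mono (subset_insert _ _), fun h a ha b hb hab => ?_⟩
  have hlt : ∀ x ∈ T, x < m := fun x hx => mem_range.1 (hT hx)
  rw [mem_insert] at ha hb
  rcases ha with rfl | ha <;> rcases hb with rfl | hb
  · exact absurd rfl hab
  · have := hlt b hb; simp only [Nat.dist]; omega
  · have := hlt a ha; simp only [Nat.dist]; omega
  · exact h a ha b hb hab

/-- The partial matchings with `k` pairs of a row of `m + 1` dots, encoded by their left ends. -/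
def sparseSubsets (m k : ℕ) : Finset (Finset ℕ) :=
  {S ∈ (range m).powersetCard k | IsSparse S}

theorem mem_sparseSubsets {m k : ℕ} {S : Finset ℕ} :
    S ∈ sparseSubsets m k ↔ S ⊆ range m ∧ #S = k ∧ IsSparse S := by
  simp only [sparseSubsets, mem_filter, mem_powersetCard, and_assoc]

theorem sparseSubsets_eq_powersetCard {m k : ℕ} (h : m ≤ 1 ∨ k = 0) :
    sparseSubsets m k = (range m).powersetCard k := by
  refine filter_true_of_mem fun S hS => isSparse_of_card_le_one ?_
  rw [mem_powersetCard] at hS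
  have := (card_le_card hS.1).trans_eq (card_range m)
  omega

theorem sparseSubsets_add_two_succ (m k : ℕ) :
    sparseSubsets (m + 2) (k + 1) =
      sparseSubsets (m + 1) (k + 1) ∪ (sparseSubsets m k).image (insert (m + 1)) := by
  ext S
  simp only [mem_union, mem_image, mem_sparseSubsets]
  constructor
  · rintro ⟨hSm, hcard, hS⟩
    by_cases hmS : m + 1 ∈ S
    · refine .inr ⟨S.erase (m + 1), ⟨fun x hx => ?_, ?_, hS.mono (erase_subset _ _)⟩,
        insert_erase hmS⟩
      · -- `x ≠ m + 1` lies in `S`, so sparseness forces `x ≠ m` as well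
        obtain ⟨hxm, hx⟩ := mem_erase.1 hx
        have hdist := hS x hx _ hmS hxm
        have := mem_range.1 (hSm hx)
        simp only [Nat.dist] at hdist
        exact mem_range.2 (by omega)
      · rw [card_erase_of_mem hmS, hcard, Nat.add_sub_cancel]
    · refine .inl ⟨fun x hx => mem_range.2 ?_, hcard, hS⟩
      have := mem_range.1 (hSm hx)
      have : x ≠ m + 1 := fun h => hmS (h ▸ hx)
      omega
  · rintro (⟨hSm, hcard, hS⟩ | ⟨T, ⟨hTm, hcard, hT⟩, rfl⟩)
    · exact ⟨hSm.trans (range_subset_range.2 (by omega)), hcard, hS⟩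
    · have hmT : m + 1 ∉ T := fun h => by simpa using hTm h
      refine ⟨insert_subset (by simp) (hTm.trans (range_subset_range.2 (by omega))), ?_,
        (isSparse_insert_add_one hTm).2 hT⟩
      rw [card_insert_of_notMem hmT, hcard]

theorem card_sparseSubsets_add_two_succ (m k : ℕ) :
    #(sparseSubsets (m + 2) (k + 1)) = #(sparseSubsets (m + 1) (k + 1)) + #(sparseSubsets m k) := by
  have not_mem : ∀ {j : ℕ} {T : Finset ℕ}, T ∈ sparseSubsets j k → j + 1 ∉ T :=
    fun hT h => by simpa using (mem_sparseSubsets.1 hT).1 h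
  rw [sparseSubsets_add_two_succ, card_union_of_disjoint, card_image_of_injOn]
  · intro S hS T hT hST
    simpa [erase_insert (not_mem hS), erase_insert (not_mem hT)] using
      congrArg (erase · (m + 1)) hST
  · refine disjoint_left.2 fun S hS hS' => ?_
    obtain ⟨T, -, rfl⟩ := mem_image.1 hS'
    simpa using (mem_sparseSubsets.1 hS).1 (mem_insert_self (m + 1) T)

theorem Nat.choose_add_two_sub_succ (m k : ℕ) :
    (m + 2 - k).choose (k + 1) = (m + 1 - k).choose (k + 1) + (m + 1 - k).choose k := by
  rcases le_or_gt k (m + 1) with hk | hk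
  · rw [show m + 2 - k = m + 1 - k + 1 by omega, Nat.choose_succ_succ', add_comm]
  · obtain ⟨j, rfl⟩ := Nat.exists_eq_add_of_lt hk
    simp [show m + 2 - (m + 1 + j + 1) = 0 by omega, show m + 1 - (m + 1 + j + 1) = 0 by omega]

theorem card_sparseSubsets : ∀ m k : ℕ, #(sparseSubsets m k) = (m + 1 - k).choose k
  | 0, k | 1, k => by
    rw [sparseSubsets_eq_powersetCard (by omega), card_powersetCard, card_range]
    rcases k with _ | _ | k <;> simp [Nat.choose_eq_zero_of_lt]
  | m + 2, 0 => by simp [sparseSubsets_eq_powersetCard]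
  | m + 2, k + 1 => by
    rw [card_sparseSubsets_add_two_succ, card_sparseSubsets (m + 1) (k + 1),
      card_sparseSubsets m k, Nat.add_sub_add_right, Nat.add_sub_add_right]
    exact (Nat.choose_add_two_sub_succ m k).symm

/-- The number of partial matchings of the row of `n` dots consisting of
exactly `k` pairs equals `Nat.choose (n - k) k`.  A partial matching is a finite set
`S ⊆ {0, 1, …, n-2}` such that any two distinct elements of `S` differ by at least `2`. -/
theorem row_matching_count (n k : ℕ) :
    Set.ncard {S : Finset ℕ | S ⊆ Finset.range (n - 1) ∧ S.card = k ∧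
      ∀ a ∈ S, ∀ b ∈ S, a ≠ b → 2 ≤ Nat.dist a b} = Nat.choose (n - k) k := by
  have hset : {S : Finset ℕ | S ⊆ range (n - 1) ∧ #S = k ∧
      ∀ a ∈ S, ∀ b ∈ S, a ≠ b → 2 ≤ Nat.dist a b} = ↑(sparseSubsets (n - 1) k) :=
    Set.ext fun _ => mem_sparseSubsets.symm
  rw [hset, Set.ncard_coe_finset, card_sparseSubsets]
  rcases n with _ | n
  · rcases k with _ | k <;> simp
  · simp
end

section
/- Let α be a linearly ordered type, let s be a finite subset of α, and let e, f be two distinct elements of α with e ∉ s and f ∉ s. Then the natural number |{g ∈ s : e < g}| + |{g ∈ insert e s : f < g}| + |{g ∈ s : f < g}| + |{g ∈ insert f s : e < g}| is odd. (Equivalently, the signs (−1)^{|{g ∈ s : e < g}|} · (−1)^{|{g ∈ insert e s : f < g}|} and (−1)^{|{g ∈ s : f < g}|} · (−1)^{|{g ∈ insert f s : e < g}|} attached to the two ways of enlarging s first by e then by f, respectively first by f then by e, are opposite.) -/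
namespace Finset

variable {α : Type*} [LinearOrder α] {s : Finset α} {e f : α}

theorem filter_lt_insert_of_le (h : e ≤ f) :
    (insert e s).filter (f < ·) = s.filter (f < ·) := by
  rw [filter_insert, if_neg h.not_gt]

theorem card_filter_lt_insert_of_lt (hf : f ∉ s) (h : e < f) :
    ((insert f s).filter (e < ·)).card = (s.filter (e < ·)).card + 1 := by
  rw [filter_insert, if_pos h, card_insert_of_notMem fun hm => hf (mem_filter.1 hm).1]

end Finset

/-- the sign lemma making the squares in the cube anticommute. -/
theorem sign_lemma {α : Type*} [LinearOrder α] (s : Finset α) (e f : α)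
    (he : e ∉ s) (hf : f ∉ s) (hef : e ≠ f) :
    Odd ((s.filter (fun g => e < g)).card + (((insert e s).filter (fun g => f < g)).card)
      + ((s.filter (fun g => f < g)).card) + (((insert f s).filter (fun g => e < g)).card)) := by
  -- the sum is symmetric in `e` and `f`
  wlog h : e < f generalizing e f
  · convert this f e hf he hef.symm (lt_of_le_of_ne (not_lt.1 h) hef.symm) using 1
    ring
  rw [Finset.filter_lt_insert_of_le h.le, Finset.card_filter_lt_insert_of_lt hf h]
  exact ⟨(s.filter (e < ·)).card + (s.filter (f < ·)).card, by ring⟩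
end

section
/- Fix a natural number n, and let M_n denote the set of partial matchings of the row of n dots. Call a position e ∈ {0, …, n−2} admissible for S ∈ M_n if e ∉ S and |e − g| ≥ 2 for every g ∈ S (so that S ∪ {e} is again a partial matching). Define the ℤ-linear map d on the free ℤ-module with basis M_n (i.e., on M_n →₀ ℤ) by sending the basis element S to the sum, over all positions e admissible for S, of (−1)^{|{g ∈ S : e < g}|} times the basis element S ∪ {e}. Then d ∘ d = 0. -/
open scoped Classical

/-- A partial matching of the row of `n` dots: a finite set of positions in
`{0, 1, …, n-2}` any two distinct elements of which differ by at least `2`. -/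
def IsRowMatching (n : ℕ) (S : Finset ℕ) : Prop :=
  S ⊆ Finset.range (n - 1) ∧ ∀ a ∈ S, ∀ b ∈ S, a ≠ b → 2 ≤ Nat.dist a b

/-- The set `M_n` of partial matchings of the row of `n` dots. -/
def RowMatching (n : ℕ) : Type := {S : Finset ℕ // IsRowMatching n S}

/-- The combinatorial differential `d` on the free `ℤ`-module with basis `M_n`:
the basis element `S` is sent to the sum, over all positions `e` admissible for `S`
(i.e. such that `e ∉ S` and `S ∪ {e}` is again a partial matching), of
`(-1) ^ |{g ∈ S : e < g}|` times the basis element `S ∪ {e}`. -/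
noncomputable def rowDiff (n : ℕ) : (RowMatching n →₀ ℤ) →ₗ[ℤ] (RowMatching n →₀ ℤ) :=
  Finsupp.lift _ ℤ _ fun S =>
    ∑ e ∈ Finset.range (n - 1),
      if h : e ∉ S.val ∧ IsRowMatching n (insert e S.val) then
        ((-1 : ℤ) ^ ((S.val.filter (fun g => e < g)).card)) •
          Finsupp.single (⟨insert e S.val, h.2⟩ : RowMatching n) (1 : ℤ)
      else 0

/-!
Expanding `d (d S)` gives one term for each ordered pair `(e, f)` of positions along the path
`S → S ∪ {e} → S ∪ {e, f}`. Whether this path exists is symmetric in `e` and `f`, but the sign is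
not: adding `f` after `e` picks up an extra factor `-1` exactly when `f < e`, so exactly one
of the two orders does, and the terms of `(e, f)` and `(f, e)` cancel.
-/

open Finset

theorem Finset.sum_sum_eq_zero_of_add_swap_eq_zero {ι M : Type*} [AddCommMonoid M]
    (s : Finset ι) (g : ι → ι → M) (hdiag : ∀ i, g i i = 0)
    (hswap : ∀ i j, g i j + g j i = 0) : ∑ i ∈ s, ∑ j ∈ s, g i j = 0 := by
  rw [← sum_product']
  refine sum_involution (fun p _ => p.swap) (fun p _ => hswap p.1 p.2) ?_
    (fun p hp => mem_product.2 (mem_product.1 hp).symm) (fun p _ => rfl)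
  rintro ⟨i, j⟩ _ hne heq
  obtain rfl : j = i := congrArg Prod.fst heq
  exact hne (hdiag j)

lemma IsRowMatching.subset {n : ℕ} {S T : Finset ℕ} (hT : IsRowMatching n T)
    (hST : S ⊆ T) : IsRowMatching n S :=
  ⟨hST.trans hT.1, fun a ha b hb hab => hT.2 a (hST ha) b (hST hb) hab⟩

namespace RowMatching

def IsAdmissible (n : ℕ) (S : Finset ℕ) (e : ℕ) : Prop :=
  e ∉ S ∧ IsRowMatching n (insert e S)

lemma isAdmissible_insert_comm {n : ℕ} {S : Finset ℕ} {e f : ℕ} :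
    IsAdmissible n S e ∧ IsAdmissible n (insert e S) f ↔
      IsAdmissible n S f ∧ IsAdmissible n (insert f S) e := by
  suffices key : ∀ e f, IsAdmissible n S e ∧ IsAdmissible n (insert e S) f →
      IsAdmissible n S f ∧ IsAdmissible n (insert f S) e from ⟨key e f, key f e⟩
  rintro e f ⟨⟨he, -⟩, hf, hfe⟩
  rw [mem_insert, not_or] at hf
  rw [insert_comm] at hfe
  exact ⟨⟨hf.2, hfe.subset (subset_insert e _)⟩,
    by simpa [IsAdmissible, he] using Ne.symm hf.1, hfe⟩

def addPair {n : ℕ} (S : RowMatching n) (e : ℕ) (h : IsAdmissible n S.1 e) : RowMatching n :=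
  ⟨insert e S.1, h.2⟩

/-- `(-1) ^ o(S, S ∪ {e})`, the matrix entry of `rowDiff`. -/
def sign (S : Finset ℕ) (e : ℕ) : ℤ := (-1) ^ #(S.filter (e < ·))

lemma sign_insert {S : Finset ℕ} {e : ℕ} (he : e ∉ S) (f : ℕ) :
    sign (insert e S) f = if f < e then -sign S f else sign S f := by
  unfold sign
  rw [filter_insert]
  split_ifs with hfe
  · rw [card_insert_of_notMem (fun h => he (mem_filter.1 h).1), pow_succ, mul_neg_one]
  · rfl

lemma sign_mul_sign_insert_swap {S : Finset ℕ} {e f : ℕ} (he : e ∉ S) (hf : f ∉ S)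
    (hef : e ≠ f) : sign S e * sign (insert e S) f = -(sign S f * sign (insert f S) e) := by
  rw [sign_insert he, sign_insert hf]
  rcases hef.lt_or_gt with h | h <;> simp [h, h.not_gt, mul_comm]

lemma rowDiff_single (n : ℕ) (S : RowMatching n) :
    rowDiff n (Finsupp.single S 1) = ∑ e ∈ range (n - 1),
      if h : IsAdmissible n S.1 e then
        sign S.1 e • Finsupp.single (S.addPair e h) 1
      else 0 := by
  simp only [rowDiff, Finsupp.lift_apply, zero_smul, Finsupp.sum_single_index, one_smul]
  exact sum_congr rfl fun e _ => dite_congr rfl (fun _ => rfl) fun _ => rfl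

/-- The contribution of the path `S → S ∪ {e} → S ∪ {e, f}` to `d (d S)`. -/
noncomputable def twoStep (n : ℕ) (S : RowMatching n) (e f : ℕ) : RowMatching n →₀ ℤ :=
  if h : IsAdmissible n S.1 e ∧ IsAdmissible n (insert e S.1) f then
    (sign S.1 e * sign (insert e S.1) f) • Finsupp.single ((S.addPair e h.1).addPair f h.2) 1
  else 0

lemma rowDiff_rowDiff_single (n : ℕ) (S : RowMatching n) :
    rowDiff n (rowDiff n (Finsupp.single S 1)) =
      ∑ e ∈ range (n - 1), ∑ f ∈ range (n - 1), twoStep n S e f := by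
  rw [rowDiff_single, map_sum]
  refine sum_congr rfl fun e _ => ?_
  by_cases he : IsAdmissible n S.1 e
  · rw [dif_pos he, map_smul, rowDiff_single, smul_sum]
    refine sum_congr rfl fun f _ => ?_
    by_cases hf : IsAdmissible n (insert e S.1) f
    · rw [dif_pos (c := IsAdmissible n (S.addPair e he).1 f) hf, twoStep, dif_pos ⟨he, hf⟩,
        smul_smul]
      rfl
    · rw [dif_neg (c := IsAdmissible n (S.addPair e he).1 f) hf, twoStep,
        dif_neg fun h => hf h.2, smul_zero]
  · rw [dif_neg he, map_zero]
    exact (sum_eq_zero fun f _ => dif_neg fun h => he h.1).symm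

lemma twoStep_self (n : ℕ) (S : RowMatching n) (e : ℕ) : twoStep n S e e = 0 :=
  dif_neg fun h => h.2.1 (mem_insert_self e _)

lemma twoStep_add_twoStep_swap (n : ℕ) (S : RowMatching n) (e f : ℕ) :
    twoStep n S e f + twoStep n S f e = 0 := by
  rw [twoStep, twoStep]
  by_cases h : IsAdmissible n S.1 e ∧ IsAdmissible n (insert e S.1) f
  · have h' := isAdmissible_insert_comm.1 h
    have hef : e ≠ f := fun hef => h.2.1 (hef ▸ mem_insert_self e _)
    have hsame : (S.addPair f h'.1).addPair e h'.2 = (S.addPair e h.1).addPair f h.2 :=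
      Subtype.ext (insert_comm e f _)
    rw [dif_pos h, dif_pos h', hsame, sign_mul_sign_insert_swap h.1.1 h'.1.1 hef,
      neg_smul, neg_add_cancel]
  · rw [dif_neg h, dif_neg (mt isAdmissible_insert_comm.2 h), add_zero]

end RowMatching

open RowMatching in
/-- `d ∘ d = 0`. -/
theorem rowDiff_comp_rowDiff (n : ℕ) : (rowDiff n).comp (rowDiff n) = 0 := by
  refine Finsupp.lhom_ext' fun S => LinearMap.ext_ring ?_
  rw [LinearMap.comp_apply, LinearMap.comp_apply, Finsupp.lsingle_apply, rowDiff_rowDiff_single,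
    LinearMap.zero_comp, LinearMap.zero_apply]
  exact sum_sum_eq_zero_of_add_swap_eq_zero _ _ (twoStep_self n S) (twoStep_add_twoStep_swap n S)
end

section
/- Fix l and n : Fin l → ℕ, and let M denote the set of dot-row vectors for n, i.e., functions S assigning to each i : Fin l a partial matching S i of the row of n(i) dots. Order the positions (i, e) ∈ Fin l × ℕ lexicographically (first by the row index i, then by the position e within the row). Call a position (i, e) admissible for S ∈ M if e ∈ {0, …, n(i)−2}, e ∉ S i, and |e − g| ≥ 2 for every g ∈ S i. Define the ℤ-linear map d on the free ℤ-module with basis M (i.e., on M →₀ ℤ) by sending the basis element S to the sum, over all positions (i, e) admissible for S, of (−1)^{N(S, i, e)} times the basis element obtained from S by replacing S i with S i ∪ {e}, where N(S, i, e) is the number of positions (j, g) with g ∈ S j that are strictly greater than (i, e) in the lexicographic order. Then d ∘ d = 0. -/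
open scoped Classical

/-- The set `M` of dot-row vectors for `n : Fin l → ℕ`. -/
def DotRowVector (l : ℕ) (n : Fin l → ℕ) : Type :=
  {S : Fin l → Finset ℕ // ∀ i, IsRowMatching (n i) (S i)}

/-- `N(S, i, e)`: the number of positions `(j, g)` with `g ∈ S j` that are strictly
greater than `(i, e)` in the lexicographic order on `Fin l × ℕ`. -/
def lexCount {l : ℕ} (S : Fin l → Finset ℕ) (i : Fin l) (e : ℕ) : ℕ :=
  ∑ j : Fin l, ((S j).filter (fun g => i < j ∨ (i = j ∧ e < g))).card

/-- The combinatorial differential `d` on the free `ℤ`-module with basis `M`: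
the basis element `S` is sent to the sum, over all positions `(i, e)` admissible for `S`
(i.e. `e ∈ {0, …, n i - 2}`, `e ∉ S i`, and `S i ∪ {e}` is again a partial matching), of
`(-1) ^ N(S, i, e)` times the basis element obtained by replacing `S i` with `S i ∪ {e}`. -/
noncomputable def vecDiff (l : ℕ) (n : Fin l → ℕ) :
    (DotRowVector l n →₀ ℤ) →ₗ[ℤ] (DotRowVector l n →₀ ℤ) :=
  Finsupp.lift _ ℤ _ fun S =>
    ∑ i : Fin l, ∑ e ∈ Finset.range (n i - 1),
      if h : e ∉ S.val i ∧ IsRowMatching (n i) (insert e (S.val i)) then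
        ((-1 : ℤ) ^ lexCount S.val i e) •
          Finsupp.single
            (⟨Function.update S.val i (insert e (S.val i)), by
              intro j
              rcases eq_or_ne j i with hj | hj
              · subst hj; simpa using h.2
              · simpa [Function.update_of_ne hj] using S.prop j⟩ : DotRowVector l n)
            (1 : ℤ)
      else 0

/-! Expanding `d (d S)` gives a sum over ordered pairs of positions `p`, `q` such that `p` and
then `q` can be adjoined to `S`. Adjoining them in the other order is then also possible and
gives the same vector, while adjoining `p` raises the count `N(·, q)` by one exactly when `q`
lies below `p`. Hence the two orders carry opposite signs, and the double sum, being
antisymmetric in `(p, q)`, vanishes. -/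

open Finset Function

theorem Finset.sum_sum_eq_zero_of_antisymm {ι G : Type*} [AddCommGroup G] [IsAddTorsionFree G]
    (s : Finset ι) (f : ι → ι → G) (hf : ∀ p q, f q p = -f p q) :
    ∑ p ∈ s, ∑ q ∈ s, f p q = 0 :=
  self_eq_neg.mp <| calc
    ∑ p ∈ s, ∑ q ∈ s, f p q = ∑ q ∈ s, ∑ p ∈ s, -f q p :=
      sum_comm.trans <| sum_congr rfl fun q _ => sum_congr rfl fun p _ => hf q p
    _ = -∑ p ∈ s, ∑ q ∈ s, f p q := by simp only [sum_neg_distrib]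

theorem IsRowMatching.mono {m : ℕ} {T U : Finset ℕ} (h : IsRowMatching m T) (hUT : U ⊆ T) :
    IsRowMatching m U :=
  ⟨hUT.trans h.1, fun a ha b hb => h.2 a (hUT ha) b (hUT hb)⟩

section AdjoinPair

variable {l : ℕ}

def adjoinPair (S : Fin l → Finset ℕ) (i : Fin l) (e : ℕ) : Fin l → Finset ℕ :=
  update S i (insert e (S i))

@[simp] theorem adjoinPair_self (S : Fin l → Finset ℕ) (i : Fin l) (e : ℕ) :
    adjoinPair S i e i = insert e (S i) :=
  update_self _ _ _

@[simp] theorem adjoinPair_of_ne (S : Fin l → Finset ℕ) {i j : Fin l} (e : ℕ) (h : j ≠ i) :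
    adjoinPair S i e j = S j :=
  update_of_ne h _ _

theorem adjoinPair_comm (S : Fin l → Finset ℕ) (i j : Fin l) (e f : ℕ) :
    adjoinPair (adjoinPair S i e) j f = adjoinPair (adjoinPair S j f) i e := by
  rcases eq_or_ne j i with rfl | hji
  · simp only [adjoinPair, update_self, update_idem, Finset.insert_comm]
  · simp only [adjoinPair, update_of_ne hji, update_of_ne hji.symm, update_comm hji]

theorem lexCount_adjoinPair {S : Fin l → Finset ℕ} {i : Fin l} {e : ℕ} (he : e ∉ S i)
    (j : Fin l) (f : ℕ) :
    lexCount (adjoinPair S i e) j f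
      = lexCount S j f + if toLex (j, f) < toLex (i, e) then 1 else 0 := by
  have hcard (k : Fin l) (T : Finset ℕ) :
      #{g ∈ update S i T k | j < k ∨ j = k ∧ f < g}
        = update (fun k => #{g ∈ S k | j < k ∨ j = k ∧ f < g}) i
            #{g ∈ T | j < i ∨ j = i ∧ f < g} k :=
    apply_update (fun k (T : Finset ℕ) => #{g ∈ T | j < k ∨ j = k ∧ f < g}) S i T k
  rw [lexCount, lexCount, adjoinPair]
  simp only [hcard, sum_update_of_mem (mem_univ i), ← add_sum_erase _ _ (mem_univ i),
    sdiff_singleton_eq_erase, filter_insert, Prod.Lex.toLex_lt_toLex]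
  split_ifs with h
  · rw [card_insert_of_notMem fun hm => he (mem_filter.1 hm).1]
    omega
  · omega

def Admissible (n : Fin l → ℕ) (S : Fin l → Finset ℕ) (i : Fin l) (e : ℕ) : Prop :=
  e ∉ S i ∧ IsRowMatching (n i) (insert e (S i))

variable {n : Fin l → ℕ} {S : Fin l → Finset ℕ} {i j : Fin l} {e f : ℕ}

theorem Admissible.ne (h : Admissible n (adjoinPair S i e) j f) : (i, e) ≠ (j, f) := by
  rintro ⟨⟩
  exact h.1 (by simp)

theorem Admissible.swap (h₁ : Admissible n S i e) (h₂ : Admissible n (adjoinPair S i e) j f) :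
    Admissible n S j f ∧ Admissible n (adjoinPair S j f) i e := by
  rcases eq_or_ne j i with rfl | hji
  · obtain ⟨hf, hm⟩ := h₂
    simp only [adjoinPair_self, mem_insert, not_or] at hf hm
    refine ⟨⟨hf.2, hm.mono (insert_subset_insert _ (subset_insert _ _))⟩, ?_, ?_⟩
    · simpa [Ne.symm hf.1] using h₁.1
    · simpa [Finset.insert_comm] using hm
  · simp only [Admissible, adjoinPair_of_ne S e hji, adjoinPair_of_ne S f hji.symm] at h₂ ⊢
    exact ⟨h₂, h₁⟩

theorem isRowMatching_adjoinPair (hS : ∀ k, IsRowMatching (n k) (S k)) (h : Admissible n S i e)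
    (k : Fin l) : IsRowMatching (n k) (adjoinPair S i e k) := by
  rcases eq_or_ne k i with rfl | hk
  · simpa using h.2
  · simpa [hk] using hS k

end AdjoinPair

namespace DotRowVector

variable {l : ℕ} {n : Fin l → ℕ}

def adjoinPair (S : DotRowVector l n) (i : Fin l) (e : ℕ) (h : Admissible n S.val i e) :
    DotRowVector l n :=
  ⟨_root_.adjoinPair S.val i e, isRowMatching_adjoinPair S.prop h⟩

theorem vecDiff_single (S : DotRowVector l n) :
    vecDiff l n (Finsupp.single S 1) =
      ∑ i, ∑ e ∈ range (n i - 1), if h : Admissible n S.val i e then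
        (-1 : ℤ) ^ lexCount S.val i e • Finsupp.single (S.adjoinPair i e h) 1 else 0 := by
  rw [vecDiff, Finsupp.lift_apply, Finsupp.sum_single_index (by simp), one_smul]
  exact sum_congr rfl fun i _ => sum_congr rfl fun e _ => dite_congr rfl (fun _ => rfl) fun _ => rfl

noncomputable def adjoinTwiceTerm (S : DotRowVector l n) (i : Fin l) (e : ℕ) (j : Fin l)
    (f : ℕ) : DotRowVector l n →₀ ℤ :=
  if h : Admissible n S.val i e ∧ Admissible n (_root_.adjoinPair S.val i e) j f then
    (-1 : ℤ) ^ (lexCount S.val i e + lexCount (_root_.adjoinPair S.val i e) j f) •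
      Finsupp.single ((S.adjoinPair i e h.1).adjoinPair j f h.2) 1
  else 0

theorem vecDiff_vecDiff_single (S : DotRowVector l n) :
    vecDiff l n (vecDiff l n (Finsupp.single S 1)) =
      ∑ i, ∑ e ∈ range (n i - 1), ∑ j, ∑ f ∈ range (n j - 1),
        S.adjoinTwiceTerm i e j f := by
  rw [vecDiff_single, map_sum]
  refine sum_congr rfl fun i _ => ?_
  rw [map_sum]
  refine sum_congr rfl fun e _ => ?_
  by_cases h₁ : Admissible n S.val i e
  · simp only [dif_pos h₁, map_zsmul, vecDiff_single, smul_sum]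
    refine sum_congr rfl fun j _ => sum_congr rfl fun f _ => ?_
    by_cases h₂ : Admissible n (_root_.adjoinPair S.val i e) j f
    · rw [dif_pos (show Admissible n (S.adjoinPair i e h₁).val j f from h₂), smul_smul,
        ← pow_add, adjoinTwiceTerm, dif_pos ⟨h₁, h₂⟩]
      rfl
    · rw [dif_neg (show ¬Admissible n (S.adjoinPair i e h₁).val j f from h₂), smul_zero,
        adjoinTwiceTerm, dif_neg fun h => h₂ h.2]
  · simp only [map_zero, adjoinTwiceTerm, h₁, false_and, dite_false, sum_const_zero]

theorem adjoinTwiceTerm_swap (S : DotRowVector l n) (i : Fin l) (e : ℕ) (j : Fin l) (f : ℕ) :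
    S.adjoinTwiceTerm j f i e = -S.adjoinTwiceTerm i e j f := by
  by_cases h : Admissible n S.val i e ∧ Admissible n (_root_.adjoinPair S.val i e) j f
  · obtain ⟨h₁, h₂⟩ := h
    obtain ⟨h₁', h₂'⟩ := h₁.swap h₂
    have hS : (S.adjoinPair j f h₁').adjoinPair i e h₂'
        = (S.adjoinPair i e h₁).adjoinPair j f h₂ :=
      Subtype.ext (adjoinPair_comm S.val j i f e)
    rw [adjoinTwiceTerm, dif_pos ⟨h₁', h₂'⟩, adjoinTwiceTerm, dif_pos ⟨h₁, h₂⟩, hS,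
      ← neg_smul, lexCount_adjoinPair h₁.1, lexCount_adjoinPair h₁'.1]
    have hne : toLex (i, e) ≠ toLex (j, f) := h₂.ne
    rcases hne.lt_or_gt with hlt | hgt
    · rw [if_pos hlt, if_neg hlt.asymm]
      congr 1
      ring
    · rw [if_neg hgt.asymm, if_pos hgt]
      congr 1
      ring
  · have h' : ¬(Admissible n S.val j f ∧ Admissible n (_root_.adjoinPair S.val j f) i e) :=
      fun ⟨h₁, h₂⟩ => h (h₁.swap h₂)
    rw [adjoinTwiceTerm, dif_neg h', adjoinTwiceTerm, dif_neg h, neg_zero]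

end DotRowVector

/-- `d ∘ d = 0`. -/
theorem vecDiff_comp_vecDiff (l : ℕ) (n : Fin l → ℕ) :
    (vecDiff l n).comp (vecDiff l n) = 0 := by
  refine Finsupp.lhom_ext' fun S => LinearMap.ext_ring ?_
  have h := sum_sum_eq_zero_of_antisymm (univ.sigma fun i => range (n i - 1))
    (fun p q => S.adjoinTwiceTerm p.1 p.2 q.1 q.2) fun p q => S.adjoinTwiceTerm_swap p.1 p.2 q.1 q.2
  simp only [sum_sigma] at h
  simpa [DotRowVector.vecDiff_vecDiff_single] using h
end

section
/- Let R be a commutative ring, let n be a natural number, and let x : ℕ → R be any function. Then the sum, over all partial matchings S of the row of n dots, of (−1)^{|S|} · x(n − 2|S|), equals the sum over k from 0 to ⌊n/2⌋ of (−1)^k · C(n−k, k) · x(n − 2k), where C(n−k, k) = Nat.choose (n − k) k is interpreted in R via the natural map ℤ → R. -/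
/-!
Grouping the partial matchings by their number of pairs turns the left-hand side into
`∑ₖ (-1)^k N(n, k) x(n - 2k)`, where `N(n, k)` counts the matchings of `n` dots with `k` pairs.
Splitting the matchings of `n + 2` dots according to whether the last pair `{n, n+1}` is used gives
`N(n+2, k+1) = N(n+1, k+1) + N(n, k)`, which is Pascal's rule for `C(n-k, k)`; hence
`N(n, k) = C(n-k, k)`. In particular `N(n, k) = 0` for `2k > n`, so only `k ≤ ⌊n/2⌋` contributes.
-/

open Finset

def rowMatchings (n : ℕ) : Finset (Finset ℕ) :=
  (range (n - 1)).powerset.filter (fun S => ∀ a ∈ S, ∀ b ∈ S, a ≠ b → 2 ≤ Nat.dist a b)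

namespace rowMatchings

variable {n k : ℕ} {S : Finset ℕ}

theorem mem_iff :
    S ∈ rowMatchings n ↔ S ⊆ range (n - 1) ∧ ∀ a ∈ S, ∀ b ∈ S, a ≠ b → 2 ≤ Nat.dist a b := by
  simp [rowMatchings]

theorem of_le_one (hn : n ≤ 1) : rowMatchings n = {∅} := by
  ext S
  simp +contextual [mem_iff, Nat.sub_eq_zero_of_le hn, subset_empty]

theorem empty_mem : ∅ ∈ rowMatchings n := by
  simp [mem_iff]

theorem filter_notMem : {S ∈ rowMatchings (n + 2) | n ∉ S} = rowMatchings (n + 1) := by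
  ext S
  simp only [mem_filter, mem_iff, subset_iff, mem_range]
  constructor
  · rintro ⟨⟨hsub, hsep⟩, hn⟩
    refine ⟨fun a ha => ?_, hsep⟩
    have : a ≠ n := by rintro rfl; exact hn ha
    have := hsub ha
    omega
  · rintro ⟨hsub, hsep⟩
    exact ⟨⟨fun a ha => by have := hsub ha; omega, hsep⟩, fun h => by have := hsub h; omega⟩

theorem erase_mem (hS : S ∈ rowMatchings (n + 2)) (hn : n ∈ S) : S.erase n ∈ rowMatchings n := by
  rw [mem_iff] at hS ⊢
  obtain ⟨hsub, hsep⟩ := hS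
  refine ⟨fun a ha => ?_, fun a ha b hb => hsep a (mem_of_mem_erase ha) b (mem_of_mem_erase hb)⟩
  have hlt : a < n + 1 := by simpa using hsub (mem_of_mem_erase ha)
  have hfar : 2 ≤ Nat.dist a n := hsep a (mem_of_mem_erase ha) n hn (ne_of_mem_erase ha)
  simp only [Nat.dist, mem_range] at hfar ⊢
  omega

theorem notMem_of_mem (hS : S ∈ rowMatchings n) : n ∉ S := fun h => by
  have := (mem_iff.1 hS).1 h
  simp only [mem_range] at this
  omega

theorem insert_mem (hS : S ∈ rowMatchings n) : insert n S ∈ rowMatchings (n + 2) := by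
  rw [mem_iff] at hS ⊢
  obtain ⟨hsub, hsep⟩ := hS
  have hlt : ∀ a ∈ S, a < n - 1 := fun a ha => by simpa using hsub ha
  refine ⟨insert_subset (by simp) (hsub.trans (range_subset_range.2 (by omega))), ?_⟩
  simp only [mem_insert, Nat.dist]
  rintro a (rfl | ha) b (rfl | hb) hab
  · exact absurd rfl hab
  · have := hlt b hb; omega
  · have := hlt a ha; omega
  · exact hsep a ha b hb hab

theorem card_filter_mem_card_eq_succ :
    #{S ∈ rowMatchings (n + 2) | #S = k + 1 ∧ n ∈ S} = #{S ∈ rowMatchings n | #S = k} := by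
  refine card_nbij' (·.erase n) (insert n) ?_ ?_ ?_ ?_
  · intro S
    simp only [coe_filter, Set.mem_ofPred_eq]
    rintro ⟨hS, hcard, hn⟩
    exact ⟨erase_mem hS hn, by rw [card_erase_of_mem hn, hcard, Nat.add_sub_cancel]⟩
  · intro S
    simp only [coe_filter, Set.mem_ofPred_eq]
    rintro ⟨hS, hcard⟩
    exact ⟨insert_mem hS, by rw [card_insert_of_notMem (notMem_of_mem hS), hcard],
      mem_insert_self n S⟩
  · intro S
    simp only [coe_filter, Set.mem_ofPred_eq]
    rintro ⟨-, -, hn⟩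
    exact insert_erase hn
  · intro S
    simp only [coe_filter, Set.mem_ofPred_eq]
    rintro ⟨hS, -⟩
    exact erase_insert (notMem_of_mem hS)

theorem card_filter_card_eq_succ_succ :
    #{S ∈ rowMatchings (n + 2) | #S = k + 1}
      = #{S ∈ rowMatchings (n + 1) | #S = k + 1} + #{S ∈ rowMatchings n | #S = k} := by
  rw [← card_filter_add_card_filter_not (p := fun S => n ∈ S), filter_filter, filter_filter,
    card_filter_mem_card_eq_succ, ← filter_notMem (n := n), filter_filter, add_comm]
  simp only [and_comm]

theorem card_filter_card_eq (n k : ℕ) : #{S ∈ rowMatchings n | #S = k} = (n - k).choose k := by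
  induction n using Nat.twoStepInduction generalizing k with
  | zero => rcases k with _ | _ <;> simp [of_le_one, filter_eq']
  | one => rcases k with _ | _ | _ <;> simp [of_le_one, filter_eq']
  | more n ih₀ ih₁ =>
    rcases k with _ | k
    · simp [filter_eq', card_eq_zero, empty_mem]
    rw [card_filter_card_eq_succ_succ, ih₀, ih₁, Nat.add_sub_add_right]
    rcases le_or_gt k n with hk | hk
    · rw [show n + 2 - (k + 1) = n - k + 1 by omega, Nat.choose_succ_succ', add_comm]
    · have hk' : n + 2 - (k + 1) = 0 := by omega
      simp [hk', Nat.sub_eq_zero_of_le hk.le, Nat.choose_eq_zero_of_lt (hk.trans_le' n.zero_le)]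

theorem two_mul_card_le (hS : S ∈ rowMatchings n) : 2 * #S ≤ n := by
  have hne : (n - #S).choose #S ≠ 0 := by
    rw [← card_filter_card_eq, ← pos_iff_ne_zero, card_pos]
    exact ⟨S, mem_filter.2 ⟨hS, rfl⟩⟩
  have := Nat.choose_eq_zero_iff.not.1 hne
  omega

end rowMatchings

/-- the sum over all partial matchings `S` of the row of `n` dots of
`(-1)^|S| * x (n - 2|S|)` equals `∑_{k=0}^{⌊n/2⌋} (-1)^k * C(n-k, k) * x (n - 2k)`. -/
theorem euler_char_row_sum (R : Type*) [CommRing R] (n : ℕ) (x : ℕ → R) :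
    ∑ S ∈ (Finset.range (n - 1)).powerset.filter
        (fun S => ∀ a ∈ S, ∀ b ∈ S, a ≠ b → 2 ≤ Nat.dist a b),
      (-1 : R) ^ S.card * x (n - 2 * S.card)
    = ∑ k ∈ Finset.range (n / 2 + 1),
      (-1 : R) ^ k * ((Nat.choose (n - k) k : ℤ) : R) * x (n - 2 * k) := by
  have hcard : ∀ S ∈ rowMatchings n, #S ∈ range (n / 2 + 1) := fun S hS => by
    have := rowMatchings.two_mul_card_le hS
    rw [mem_range]
    omega
  calc ∑ S ∈ rowMatchings n, (-1 : R) ^ #S * x (n - 2 * #S)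
      = ∑ k ∈ range (n / 2 + 1), ∑ S ∈ rowMatchings n with #S = k, (-1 : R) ^ k * x (n - 2 * k) :=
        (sum_fiberwise_of_maps_to' hcard fun k => (-1 : R) ^ k * x (n - 2 * k)).symm
    _ = _ := sum_congr rfl fun k _ => by
        rw [sum_const, rowMatchings.card_filter_card_eq, nsmul_eq_mul, Int.cast_natCast,
          mul_left_comm, mul_assoc]
end

section
/- Let R be a commutative ring, let l be a natural number, let n : Fin l → ℕ, and let x : (Fin l → ℕ) → R be any function. Then the sum, over all dot-row vectors S for n (i.e., over all functions S with S i a partial matching of the row of n(i) dots for each i), of (−1)^{Σ_i |S i|} · x(fun i => n i − 2·|S i|), equals the sum, over all k : Fin l → ℕ with k i ≤ ⌊n i / 2⌋ for every i, of (−1)^{Σ_i k i} · (∏_i C(n i − k i, k i)) · x(fun i => n i − 2·k i), where the binomial coefficients are interpreted in R via the natural map ℤ → R. -/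
/-!
Grouping dot-row vectors by their size vector `k = (|S i|)ᵢ` turns the left side into the right
side once each fibre is counted: it is a product over `i`, and the partial matchings of `n` dots
with `k` pairs number `C(n - k, k)`. That count satisfies Pascal's recursion, by splitting on
whether the last pair `{n, n + 1}` of `n + 2` dots is used. The vanishing of `C(n - k, k)` for
`k > n / 2` bounds the size of a matching, so the size vectors range over `k i ≤ n i / 2`.
-/

open Finset

-- Position `i` stands for the pair of dots `{i, i + 1}`.
def partialMatchings (n : ℕ) : Finset (Finset ℕ) :=
  (range (n - 1)).powerset.filter fun S => ∀ a ∈ S, ∀ b ∈ S, a ≠ b → 2 ≤ Nat.dist a b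

theorem mem_partialMatchings {n : ℕ} {S : Finset ℕ} :
    S ∈ partialMatchings n ↔
      (∀ a ∈ S, a + 1 < n) ∧ ∀ a ∈ S, ∀ b ∈ S, a ≠ b → a + 2 ≤ b ∨ b + 2 ≤ a := by
  rw [partialMatchings, mem_filter, mem_powerset]
  simp only [subset_iff, mem_range, Nat.dist]
  refine and_congr (forall₂_congr fun a _ => by omega) ?_
  exact forall₂_congr fun a _ => forall₂_congr fun b _ => imp_congr_right fun _ => by omega

theorem notMem_of_mem_partialMatchings {n : ℕ} {T : Finset ℕ} (hT : T ∈ partialMatchings n) :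
    n ∉ T := fun hn => by
  have := (mem_partialMatchings.mp hT).1 n hn
  omega

theorem insert_mem_partialMatchings {n : ℕ} {T : Finset ℕ} (hT : T ∈ partialMatchings n) :
    insert n T ∈ partialMatchings (n + 2) := by
  rw [mem_partialMatchings] at hT ⊢
  obtain ⟨hlt, hsep⟩ := hT
  refine ⟨by grind, fun a ha b hb hab => ?_⟩
  rcases mem_insert.mp ha with rfl | ha' <;> rcases mem_insert.mp hb with rfl | hb'
  · exact absurd rfl hab
  · have := hlt b hb'; omega
  · have := hlt a ha'; omega
  · exact hsep a ha' b hb' hab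

theorem erase_mem_partialMatchings {n : ℕ} {S : Finset ℕ} (hS : S ∈ partialMatchings (n + 2))
    (hn : n ∈ S) : S.erase n ∈ partialMatchings n := by
  rw [mem_partialMatchings] at hS ⊢
  obtain ⟨hlt, hsep⟩ := hS
  refine ⟨fun a ha => ?_, fun a ha b hb => hsep a (mem_of_mem_erase ha) b (mem_of_mem_erase hb)⟩
  have := hlt a (mem_of_mem_erase ha)
  have := hsep a (mem_of_mem_erase ha) n hn (ne_of_mem_erase ha)
  omega

theorem filter_notMem_partialMatchings (n : ℕ) :
    {S ∈ partialMatchings (n + 2) | n ∉ S} = partialMatchings (n + 1) := by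
  ext S
  simp only [mem_filter, mem_partialMatchings]
  constructor
  · rintro ⟨⟨hlt, hsep⟩, hn⟩
    refine ⟨fun a ha => ?_, hsep⟩
    have := hlt a ha
    have : a ≠ n := by rintro rfl; exact hn ha
    omega
  · rintro ⟨hlt, hsep⟩
    exact ⟨⟨fun a ha => by have := hlt a ha; omega, hsep⟩, fun hn => by have := hlt n hn; omega⟩

theorem card_filter_partialMatchings_add_two (n k : ℕ) :
    #{S ∈ partialMatchings (n + 2) | #S = k + 1} =
      #{S ∈ partialMatchings n | #S = k} + #{S ∈ partialMatchings (n + 1) | #S = k + 1} := by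
  rw [← card_filter_add_card_filter_not (p := fun S : Finset ℕ => n ∈ S), filter_filter,
    filter_filter]
  congr 1
  · refine card_nbij' (·.erase n) (insert n) (fun S hS => ?_) (fun T hT => ?_)
      (fun S hS => insert_erase (mem_filter.mp hS).2.2)
      (fun T hT => erase_insert (notMem_of_mem_partialMatchings (mem_filter.mp hT).1))
    · simp only [coe_filter, Set.mem_ofPred_eq] at hS ⊢
      obtain ⟨hS, hcard, hn⟩ := hS
      exact ⟨erase_mem_partialMatchings hS hn, by rw [card_erase_of_mem hn, hcard]; rfl⟩
    · simp only [coe_filter, Set.mem_ofPred_eq] at hT ⊢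
      obtain ⟨hT, hcard⟩ := hT
      exact ⟨insert_mem_partialMatchings hT,
        by rw [card_insert_of_notMem (notMem_of_mem_partialMatchings hT), hcard],
        mem_insert_self n T⟩
  · rw [← filter_notMem_partialMatchings n, filter_filter]
    simp only [and_comm]

theorem card_filter_partialMatchings (n k : ℕ) :
    #{S ∈ partialMatchings n | #S = k} = (n - k).choose k := by
  induction n using Nat.twoStepInduction generalizing k with
  | zero => cases k <;> simp [show partialMatchings 0 = {∅} by decide, filter_singleton]
  | one => cases k <;> simp [show partialMatchings 1 = {∅} by decide, filter_singleton]
  | more n ih ih' =>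
    cases k with
    | zero =>
      rw [Nat.choose_zero_right, card_eq_one]
      exact ⟨∅, by ext S; simp [mem_partialMatchings]; rintro rfl; simp⟩
    | succ k =>
      rw [card_filter_partialMatchings_add_two, ih, ih']
      rcases le_or_gt k n with h | h
      · rw [show n + 2 - (k + 1) = n - k + 1 by omega, show n + 1 - (k + 1) = n - k by omega,
          Nat.choose_succ_succ']
      · simp [Nat.choose_eq_zero_of_lt (show 0 < k by omega), show n - k = 0 by omega,
          show n + 1 - (k + 1) = 0 by omega, show n + 2 - (k + 1) = 0 by omega]

theorem card_le_half_of_mem_partialMatchings {n : ℕ} {S : Finset ℕ}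
    (hS : S ∈ partialMatchings n) : #S ≤ n / 2 := by
  by_contra! h
  have hzero : (n - #S).choose #S = 0 := Nat.choose_eq_zero_of_lt (by omega)
  rw [← card_filter_partialMatchings, card_eq_zero, filter_eq_empty_iff] at hzero
  exact hzero hS rfl

theorem Finset.sum_piFinset_comp_eq_sum_prod_card_smul {ι α β M : Type*} [Fintype ι]
    [DecidableEq ι] [DecidableEq β] [AddCommMonoid M] {s : ι → Finset α} {t : ι → Finset β}
    {g : α → β} (hg : ∀ i, ∀ a ∈ s i, g a ∈ t i) (f : (ι → β) → M) :
    ∑ a ∈ Fintype.piFinset s, f (fun i => g (a i)) =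
      ∑ b ∈ Fintype.piFinset t, (∏ i, #{a ∈ s i | g a = b i}) • f b := by
  have hmaps : ∀ a ∈ Fintype.piFinset s, (fun i => g (a i)) ∈ Fintype.piFinset t := by
    simp only [Fintype.mem_piFinset]
    exact fun a ha i => hg i (a i) (ha i)
  rw [← sum_fiberwise_of_maps_to hmaps]
  refine sum_congr rfl fun b _ => ?_
  have hfiber : {a ∈ Fintype.piFinset s | (fun i => g (a i)) = b} =
      Fintype.piFinset fun i => {a ∈ s i | g a = b i} := by
    ext a
    simp only [mem_filter, Fintype.mem_piFinset, funext_iff, forall_and]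
  rw [sum_congr rfl fun a ha => by rw [(mem_filter.mp ha).2], sum_const, hfiber,
    Fintype.card_piFinset]

/-- the sum over all dot-row vectors `S` for `n : Fin l → ℕ` of
`(-1)^{Σᵢ |S i|} * x (fun i => n i - 2|S i|)` equals the sum over all `k : Fin l → ℕ`
with `k i ≤ ⌊n i / 2⌋` of `(-1)^{Σᵢ k i} * (∏ᵢ C(n i - k i, k i)) * x (fun i => n i - 2 k i)`. -/
theorem euler_char_vector_sum (R : Type*) [CommRing R] (l : ℕ) (n : Fin l → ℕ)
    (x : (Fin l → ℕ) → R) :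
    ∑ S ∈ Fintype.piFinset (fun i => (Finset.range (n i - 1)).powerset.filter
        (fun S => ∀ a ∈ S, ∀ b ∈ S, a ≠ b → 2 ≤ Nat.dist a b)),
      (-1 : R) ^ (∑ i, (S i).card) * x (fun i => n i - 2 * (S i).card)
    = ∑ k ∈ Fintype.piFinset (fun i => Finset.range (n i / 2 + 1)),
      (-1 : R) ^ (∑ i, k i) * (∏ i, ((Nat.choose (n i - k i) (k i) : ℤ) : R))
        * x (fun i => n i - 2 * k i) := by
  refine (sum_piFinset_comp_eq_sum_prod_card_smul (s := fun i => partialMatchings (n i))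
    (g := card) (fun i S hS => mem_range_succ_iff.mpr (card_le_half_of_mem_partialMatchings hS))
    (fun k => (-1 : R) ^ (∑ i, k i) * x (fun i => n i - 2 * k i))).trans
    (sum_congr rfl fun k _ => ?_)
  simp only [card_filter_partialMatchings, nsmul_eq_mul, Nat.cast_prod, Int.cast_natCast]
  ring
end
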